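/- arXiv:2401.12345 — 7 statements merged into one kernel-verified Lean document; each statement's English description precedes it below -/
import Mathlib

section
/- Let R_1, R_2 ∈ ℂ^{(N+M)×(N+M)} be Hermitian positive semidefinite matrices written in block form R_i = [[R_{i,x}, R_{i,xs}],[R_{i,xs}ᴴ, R_{i,s}]] with R_{1,x}, R_{2,x} ∈ ℂ^{N×N} positive definite. If R_1 ⪰ R_2 (i.e., R_1 − R_2 is positive semidefinite), then f1(R_1) ≥ f1(R_2); that is, Tr(R_{1,s} − R_{1,xs}ᴴ R_{1,x}⁻¹ R_{1,xs}) ≥ Tr(R_{2,s} − R_{2,xs}ᴴ R_{2,x}⁻¹ R_{2,xs}). -/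
/-!
For a Hermitian `R` whose top-left block is positive definite, `R ⪰ diag(0, S)` holds exactly
when `S ⪯ S(R)`, the Schur complement of that block; so `S(R)` is the largest such `S`. Hence
`R₁ ⪰ R₂ ⪰ diag(0, S(R₂))` gives `S(R₂) ⪯ S(R₁)`, and `f1` is the trace of the Schur complement.
-/

open Matrix
open scoped ComplexOrder

/-- The MMSE functional `f1(R) := Tr(R_s − R_xsᴴ R_x⁻¹ R_xs)` of a Hermitian block matrix
`R = [[R_x, R_xs],[R_xsᴴ, R_s]]`. -/
noncomputable def f1 {N M : ℕ} (R : Matrix (Fin N ⊕ Fin M) (Fin N ⊕ Fin M) ℂ) : ℝ :=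
  ((R.toBlocks₂₂ - (R.toBlocks₁₂)ᴴ * (R.toBlocks₁₁)⁻¹ * R.toBlocks₁₂).trace).re

namespace Matrix

variable {m n R : Type*}

lemma IsHermitian.fromBlocks_toBlocks [InvolutiveStar R] {M : Matrix (m ⊕ n) (m ⊕ n) R}
    (hM : M.IsHermitian) :
    Matrix.fromBlocks M.toBlocks₁₁ M.toBlocks₁₂ M.toBlocks₁₂ᴴ M.toBlocks₂₂ = M := by
  obtain ⟨-, h₁₂, -⟩ := isHermitian_fromBlocks_iff.mp (M.fromBlocks_toBlocks.symm ▸ hM)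
  rw [h₁₂, M.fromBlocks_toBlocks]

variable [Fintype m] [DecidableEq m]

noncomputable def schurCompl₁₁ [CommRing R] [StarRing R] (M : Matrix (m ⊕ n) (m ⊕ n) R) :
    Matrix n n R :=
  M.toBlocks₂₂ - M.toBlocks₁₂ᴴ * M.toBlocks₁₁⁻¹ * M.toBlocks₁₂

variable [Fintype n] [Field R] [PartialOrder R] [StarRing R] [StarOrderedRing R]

lemma posSemidef_sub_fromBlocks_zero_iff {M : Matrix (m ⊕ n) (m ⊕ n) R}
    (hM : M.IsHermitian) (hA : M.toBlocks₁₁.PosDef) (S : Matrix n n R) :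
    (M - fromBlocks 0 0 0 S).PosSemidef ↔ (M.schurCompl₁₁ - S).PosSemidef := by
  let := hA.isUnit.invertible
  have hblocks : M - fromBlocks 0 0 0 S =
      fromBlocks M.toBlocks₁₁ M.toBlocks₁₂ M.toBlocks₁₂ᴴ (M.toBlocks₂₂ - S) := by
    conv_lhs => rw [← hM.fromBlocks_toBlocks]
    ext (i | i) (j | j) <;> simp
  rw [hblocks, PosDef.fromBlocks₁₁ _ _ hA, schurCompl₁₁, sub_right_comm]

lemma PosSemidef.schurCompl₁₁_sub {M₁ M₂ : Matrix (m ⊕ n) (m ⊕ n) R}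
    (hle : (M₁ - M₂).PosSemidef) (h₁ : M₁.IsHermitian) (h₂ : M₂.IsHermitian)
    (hA₁ : M₁.toBlocks₁₁.PosDef) (hA₂ : M₂.toBlocks₁₁.PosDef) :
    (M₁.schurCompl₁₁ - M₂.schurCompl₁₁).PosSemidef := by
  have hM₂ : (M₂ - fromBlocks 0 0 0 M₂.schurCompl₁₁).PosSemidef :=
    (posSemidef_sub_fromBlocks_zero_iff h₂ hA₂ _).mpr (by simpa using PosSemidef.zero)
  refine (posSemidef_sub_fromBlocks_zero_iff h₁ hA₁ _).mp ?_
  simpa using hle.add hM₂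

end Matrix

/-- If `R₁ ⪰ R₂ ⪰ 0` are Hermitian positive semidefinite block matrices whose top-left
blocks are positive definite, then `f1(R₁) ≥ f1(R₂)`. -/
theorem f1_monotone {N M : ℕ}
    (R₁ R₂ : Matrix (Fin N ⊕ Fin M) (Fin N ⊕ Fin M) ℂ)
    (h₁ : R₁.PosSemidef) (h₂ : R₂.PosSemidef)
    (h₁x : R₁.toBlocks₁₁.PosDef) (h₂x : R₂.toBlocks₁₁.PosDef)
    (hle : (R₁ - R₂).PosSemidef) :
    f1 R₂ ≤ f1 R₁ := by
  have hS := (hle.schurCompl₁₁_sub h₁.isHermitian h₂.isHermitian h₁x h₂x).trace_nonneg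
  rw [trace_sub, sub_nonneg] at hS
  exact (Complex.le_def.mp hS).1
end

section
/- Let S be a nonempty compact convex set of Hermitian positive semidefinite matrices R ∈ ℂ^{(N+M)×(N+M)}, written in block form R = [[R_x, R_xs],[R_xsᴴ, R_s]], such that every R ∈ S has positive definite top-left block R_x. Then (i) the minimax equality inf_{W ∈ ℂ^{M×N}} sup_{R ∈ S} g(W; R_x, R_xs, R_s) = sup_{R ∈ S} inf_{W ∈ ℂ^{M×N}} g(W; R_x, R_xs, R_s) holds; and (ii) if R⋆ ∈ S maximizes f1(R) := Tr(R_s − R_xsᴴ R_x⁻¹ R_xs) over S, then the pair (W⋆, R⋆) with W⋆ := R⋆_xsᴴ (R⋆_x)⁻¹ is a saddle point, i.e., g(W⋆; R) ≤ g(W⋆; R⋆) ≤ g(W; R⋆) for all R ∈ S and all W ∈ ℂ^{M×N}. -/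
/-!
Completing the square in `W` gives
`g(W; R) = f1 R + Re Tr((W R_x - R_xsᴴ) R_x⁻¹ (W R_x - R_xsᴴ)ᴴ)`, so `f1 R = min_W g(W; R)`,
attained at the Wiener filter `R_xsᴴ R_x⁻¹`; this is the right saddle inequality.
For the left one, move from `R⋆` towards `R ∈ S` along `R⋆ + t (R - R⋆)`. The residual
`W⋆ R_x - R_xsᴴ` vanishes at `R⋆` and is linear in `R`, so it is `O(t)` and
`g(W⋆; ·) - f1` is `O(t²)` along the segment. As `g(W⋆; ·)` is linear and `f1` cannot exceed
`f1 R⋆ = g(W⋆; R⋆)`, the slope `g(W⋆; R) - g(W⋆; R⋆)` is `≤ 0`.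
A maximizer of `f1` exists by compactness and continuity, and a saddle point forces the
minimax equality.
-/

open Matrix
open scoped ComplexOrder

/-- The beamforming objective
`g(W; R) := Re Tr(W R_x Wᴴ − W R_xs − R_xsᴴ Wᴴ + R_s)` where the blocks of `R` are
`R = [[R_x, R_xs],[R_xsᴴ, R_s]]`. -/
noncomputable def gObj {N M : ℕ} (W : Matrix (Fin M) (Fin N) ℂ)
    (R : Matrix (Fin N ⊕ Fin M) (Fin N ⊕ Fin M) ℂ) : ℝ :=
  ((W * R.toBlocks₁₁ * Wᴴ - W * R.toBlocks₁₂ - (R.toBlocks₁₂)ᴴ * Wᴴ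
      + R.toBlocks₂₂).trace).re

open Filter Topology Set

theorem Matrix.IsHermitian.completeSquare {m n R : Type*} [Fintype n] [DecidableEq n]
    [CommRing R] [StarRing R] {A : Matrix n n R} (hA : A.IsHermitian) (hdet : IsUnit A.det)
    (W : Matrix m n R) (B : Matrix n m R) :
    W * A * Wᴴ - W * B - Bᴴ * Wᴴ = (W * A - Bᴴ) * A⁻¹ * (W * A - Bᴴ)ᴴ - Bᴴ * A⁻¹ * B := by
  rw [conjTranspose_sub, conjTranspose_mul, hA.eq, conjTranspose_conjTranspose]
  simp only [Matrix.sub_mul, Matrix.mul_sub, Matrix.mul_assoc,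
    mul_nonsing_inv_cancel_left _ _ hdet, nonsing_inv_mul_cancel_left _ _ hdet]
  abel

theorem Matrix.PosSemidef.re_trace_nonneg {n : Type*} [Fintype n] {A : Matrix n n ℂ}
    (hA : A.PosSemidef) : 0 ≤ A.trace.re :=
  (Complex.nonneg_iff.1 hA.trace_nonneg).1

theorem LinearMap.le_of_isMaxOn_of_sub_le_mul {E : Type*} [AddCommGroup E] [Module ℝ E]
    {S : Set E} (hS : Convex ℝ S) (h : E →ₗ[ℝ] ℝ) {φ : E → ℝ} {x y : E} (hx : x ∈ S)
    (hy : y ∈ S) (hmax : IsMaxOn φ S x) (hhx : h x = φ x) {e : ℝ → ℝ}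
    (he : Tendsto e (𝓝[>] 0) (𝓝 0))
    (hgap : ∀ t ∈ Ioo (0 : ℝ) 1, h (x + t • (y - x)) - φ (x + t • (y - x)) ≤ t * e t) :
    h y ≤ h x := by
  have hslope : ∀ t ∈ Ioo (0 : ℝ) 1, h y - h x ≤ e t := by
    rintro t ⟨ht0, ht1⟩
    have hφ : φ (x + t • (y - x)) ≤ φ x := hmax (hS.add_smul_sub_mem hx hy ⟨ht0.le, ht1.le⟩)
    have := hgap t ⟨ht0, ht1⟩
    rw [map_add, map_smul, map_sub, smul_eq_mul] at this
    nlinarith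
  have := ge_of_tendsto he (eventually_of_mem (Ioo_mem_nhdsGT one_pos) hslope)
  linarith

theorem IsSaddlePointOn.ciInf_ciSup_eq {α β γ : Type*} [ConditionallyCompleteLattice γ]
    {f : α → β → γ} {a : α} {b : β} (hsaddle : IsSaddlePointOn univ univ f a b)
    (hbddAbove : ∀ x, BddAbove (range (f x))) (hbddBelow : ∀ y, BddBelow (range (f · y))) :
    ⨅ x, ⨆ y, f x y = ⨆ y, ⨅ x, f x y := by
  have : Nonempty α := ⟨a⟩
  have : Nonempty β := ⟨b⟩
  apply le_antisymm
  · calc ⨅ x, ⨆ y, f x y ≤ ⨆ y, f a y :=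
          ciInf_le ⟨f a b, forall_mem_range.2 fun x =>
            (hsaddle x trivial b trivial).trans (le_ciSup (hbddAbove x) b)⟩ a
      _ ≤ ⨅ x, f x b := ciSup_le fun y => le_ciInf fun x => hsaddle x trivial y trivial
      _ ≤ ⨆ y, ⨅ x, f x y :=
          le_ciSup ⟨f a b, forall_mem_range.2 fun y =>
            (ciInf_le (hbddBelow y) a).trans (hsaddle a trivial y trivial)⟩ b
  · exact le_ciInf fun x => ciSup_le fun y =>
      (ciInf_le (hbddBelow y) x).trans (le_ciSup (hbddAbove x) y)

theorem Matrix.continuousAt_inv {n K : Type*} [Fintype n] [DecidableEq n] [Field K]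
    [TopologicalSpace K] [IsTopologicalRing K] [ContinuousInv₀ K] {A : Matrix n n K}
    (h : A.det ≠ 0) : ContinuousAt Inv.inv A :=
  continuousAt_matrix_inv A (by rw [Ring.inverse_eq_inv']; exact continuousAt_inv₀ h)

theorem Matrix.continuous_toBlocks₁₁ {l m n o R : Type*} [TopologicalSpace R] :
    Continuous (toBlocks₁₁ : Matrix (n ⊕ o) (l ⊕ m) R → Matrix n l R) :=
  continuous_id.matrix_submatrix Sum.inl Sum.inl

section

variable {N M : ℕ}

theorem gObj_eq_f1_add {R : Matrix (Fin N ⊕ Fin M) (Fin N ⊕ Fin M) ℂ}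
    (hA : R.toBlocks₁₁.IsHermitian) (hdet : IsUnit R.toBlocks₁₁.det)
    (W : Matrix (Fin M) (Fin N) ℂ) :
    gObj W R = f1 R + ((W * R.toBlocks₁₁ - (R.toBlocks₁₂)ᴴ) * (R.toBlocks₁₁)⁻¹
      * (W * R.toBlocks₁₁ - (R.toBlocks₁₂)ᴴ)ᴴ).trace.re := by
  rw [gObj, f1, hA.completeSquare hdet, ← Complex.add_re, ← trace_add]
  congr 2
  abel

theorem f1_le_gObj {R : Matrix (Fin N ⊕ Fin M) (Fin N ⊕ Fin M) ℂ} (hA : R.toBlocks₁₁.PosDef)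
    (W : Matrix (Fin M) (Fin N) ℂ) : f1 R ≤ gObj W R := by
  rw [gObj_eq_f1_add hA.isHermitian hA.det_pos.ne'.isUnit]
  exact le_add_of_nonneg_right (hA.inv.posSemidef.mul_mul_conjTranspose_same _).re_trace_nonneg

theorem gObj_wiener_eq_f1 {R : Matrix (Fin N ⊕ Fin M) (Fin N ⊕ Fin M) ℂ}
    (hA : R.toBlocks₁₁.IsHermitian) (hdet : IsUnit R.toBlocks₁₁.det) :
    gObj ((R.toBlocks₁₂)ᴴ * (R.toBlocks₁₁)⁻¹) R = f1 R := by
  simp [gObj_eq_f1_add hA hdet, nonsing_inv_mul_cancel_right _ _ hdet]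

noncomputable def gObjLinearMap (W : Matrix (Fin M) (Fin N) ℂ) :
    Matrix (Fin N ⊕ Fin M) (Fin N ⊕ Fin M) ℂ →ₗ[ℝ] ℝ where
  toFun := gObj W
  map_add' R R' := by
    simp only [gObj, show (R + R').toBlocks₁₁ = R.toBlocks₁₁ + R'.toBlocks₁₁ from rfl,
      show (R + R').toBlocks₁₂ = R.toBlocks₁₂ + R'.toBlocks₁₂ from rfl,
      show (R + R').toBlocks₂₂ = R.toBlocks₂₂ + R'.toBlocks₂₂ from rfl, conjTranspose_add,
      Matrix.mul_add, Matrix.add_mul, trace_add, trace_sub, Complex.add_re, Complex.sub_re]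
    ring
  map_smul' t R := by
    simp only [gObj, show (t • R).toBlocks₁₁ = t • R.toBlocks₁₁ from rfl,
      show (t • R).toBlocks₁₂ = t • R.toBlocks₁₂ from rfl,
      show (t • R).toBlocks₂₂ = t • R.toBlocks₂₂ from rfl, conjTranspose_smul, star_trivial,
      Matrix.mul_smul, Matrix.smul_mul, trace_add, trace_sub, trace_smul, Complex.add_re,
      Complex.sub_re, Complex.smul_re, smul_eq_mul, RingHom.id_apply]
    ring

theorem continuousAt_f1 {R : Matrix (Fin N ⊕ Fin M) (Fin N ⊕ Fin M) ℂ}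
    (hdet : R.toBlocks₁₁.det ≠ 0) : ContinuousAt f1 R := by
  have hinv : ContinuousAt
      (fun R : Matrix (Fin N ⊕ Fin M) (Fin N ⊕ Fin M) ℂ => (R.toBlocks₁₁)⁻¹) R :=
    (Matrix.continuousAt_inv hdet).comp Matrix.continuous_toBlocks₁₁.continuousAt
  have h12 : Continuous (toBlocks₁₂ : Matrix (Fin N ⊕ Fin M) (Fin N ⊕ Fin M) ℂ → _) :=
    continuous_id.matrix_submatrix Sum.inl Sum.inr
  have h22 : Continuous (toBlocks₂₂ : Matrix (Fin N ⊕ Fin M) (Fin N ⊕ Fin M) ℂ → _) :=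
    continuous_id.matrix_submatrix Sum.inr Sum.inr
  unfold f1
  fun_prop

theorem gObj_wiener_saddle_of_isMaxOn_f1 {S : Set (Matrix (Fin N ⊕ Fin M) (Fin N ⊕ Fin M) ℂ)}
    (hconv : Convex ℝ S) (hS : ∀ R ∈ S, R.toBlocks₁₁.PosDef)
    {Rs : Matrix (Fin N ⊕ Fin M) (Fin N ⊕ Fin M) ℂ} (hRs : Rs ∈ S) (hmax : IsMaxOn f1 S Rs) :
    (∀ R ∈ S, gObj ((Rs.toBlocks₁₂)ᴴ * (Rs.toBlocks₁₁)⁻¹) R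
        ≤ gObj ((Rs.toBlocks₁₂)ᴴ * (Rs.toBlocks₁₁)⁻¹) Rs)
      ∧ ∀ W, gObj ((Rs.toBlocks₁₂)ᴴ * (Rs.toBlocks₁₁)⁻¹) Rs ≤ gObj W Rs := by
  set Wopt := (Rs.toBlocks₁₂)ᴴ * (Rs.toBlocks₁₁)⁻¹
  have hA := hS Rs hRs
  have hopt : gObj Wopt Rs = f1 Rs := gObj_wiener_eq_f1 hA.isHermitian hA.det_pos.ne'.isUnit
  refine ⟨fun R hR => ?_, fun W => hopt ▸ f1_le_gObj hA W⟩
  set D := Wopt * R.toBlocks₁₁ - (R.toBlocks₁₂)ᴴ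
  set z : ℝ → Matrix (Fin N ⊕ Fin M) (Fin N ⊕ Fin M) ℂ := fun t => Rs + t • (R - Rs)
  refine (gObjLinearMap Wopt).le_of_isMaxOn_of_sub_le_mul hconv hRs hR hmax hopt
    (e := fun t => t * (D * ((z t).toBlocks₁₁)⁻¹ * Dᴴ).trace.re) ?_ ?_
  · have hinv : ContinuousAt (fun t => ((z t).toBlocks₁₁)⁻¹) 0 := by
      refine ContinuousAt.comp_of_eq (Matrix.continuousAt_inv hA.det_pos.ne') ?_ (by simp [z])
      exact (Matrix.continuous_toBlocks₁₁.comp (by fun_prop)).continuousAt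
    have : ContinuousAt (fun t => t * (D * ((z t).toBlocks₁₁)⁻¹ * Dᴴ).trace.re) 0 := by fun_prop
    simpa using this.tendsto.mono_left nhdsWithin_le_nhds
  · intro t ht
    have hz := hS _ (hconv.add_smul_sub_mem hRs hR (Ioo_subset_Icc_self ht))
    have hres : Wopt * (z t).toBlocks₁₁ - ((z t).toBlocks₁₂)ᴴ = t • D := by
      have hWRs : Wopt * Rs.toBlocks₁₁ = (Rs.toBlocks₁₂)ᴴ :=
        nonsing_inv_mul_cancel_right _ _ hA.det_pos.ne'.isUnit
      change Wopt * (Rs.toBlocks₁₁ + t • (R.toBlocks₁₁ - Rs.toBlocks₁₁))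
        - (Rs.toBlocks₁₂ + t • (R.toBlocks₁₂ - Rs.toBlocks₁₂))ᴴ = _
      simp only [Matrix.mul_add, Matrix.mul_smul, Matrix.mul_sub, hWRs, conjTranspose_add,
        conjTranspose_smul, conjTranspose_sub, star_trivial, D]
      module
    rw [show gObjLinearMap Wopt (z t) = gObj Wopt (z t) from rfl,
      gObj_eq_f1_add hz.isHermitian hz.det_pos.ne'.isUnit, hres]
    simp only [add_sub_cancel_left, conjTranspose_smul, star_trivial, Matrix.smul_mul,
      Matrix.mul_smul, smul_smul, trace_smul, Complex.smul_re, smul_eq_mul, mul_assoc]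
    exact le_rfl

end

/-- For a nonempty compact convex set `S` of Hermitian PSD block matrices with positive
definite top-left blocks: (i) the minimax equality
`inf_W sup_{R ∈ S} g(W; R) = sup_{R ∈ S} inf_W g(W; R)` holds; and (ii) if `R⋆ ∈ S`
maximizes `f1` over `S`, then `(W⋆, R⋆)` with `W⋆ = R⋆_xsᴴ (R⋆_x)⁻¹` is a saddle point. -/
theorem minimax_and_saddle_point {N M : ℕ}
    (S : Set (Matrix (Fin N ⊕ Fin M) (Fin N ⊕ Fin M) ℂ))
    (hne : S.Nonempty) (hcomp : IsCompact S) (hconv : Convex ℝ S)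
    (hS : ∀ R ∈ S, R.PosSemidef ∧ R.toBlocks₁₁.PosDef) :
    ((⨅ W : Matrix (Fin M) (Fin N) ℂ, ⨆ R : S, gObj W (R : Matrix _ _ ℂ))
        = ⨆ R : S, ⨅ W : Matrix (Fin M) (Fin N) ℂ, gObj W (R : Matrix _ _ ℂ))
    ∧ ∀ Rstar, Rstar ∈ S → (∀ R ∈ S, f1 R ≤ f1 Rstar) →
        ((∀ R ∈ S, gObj ((Rstar.toBlocks₁₂)ᴴ * (Rstar.toBlocks₁₁)⁻¹) R
            ≤ gObj ((Rstar.toBlocks₁₂)ᴴ * (Rstar.toBlocks₁₁)⁻¹) Rstar)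
        ∧ (∀ W : Matrix (Fin M) (Fin N) ℂ,
            gObj ((Rstar.toBlocks₁₂)ᴴ * (Rstar.toBlocks₁₁)⁻¹) Rstar ≤ gObj W Rstar)) := by
  have hA : ∀ R ∈ S, R.toBlocks₁₁.PosDef := fun R hR => (hS R hR).2
  refine ⟨?_, fun Rs hRs hmax => gObj_wiener_saddle_of_isMaxOn_f1 hconv hA hRs hmax⟩
  obtain ⟨Rs, hRs, hmax⟩ := hcomp.exists_isMaxOn hne <|
    continuousOn_of_forall_continuousAt fun R hR => continuousAt_f1 (hA R hR).det_pos.ne'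
  obtain ⟨hleft, hright⟩ := gObj_wiener_saddle_of_isMaxOn_f1 hconv hA hRs hmax
  have hbdd : ∀ W : Matrix (Fin M) (Fin N) ℂ, BddAbove (range fun R : S => gObj W R) := by
    intro W
    rw [← image_eq_range]
    exact hcomp.bddAbove_image (gObjLinearMap W).continuous_of_finiteDimensional.continuousOn
  have hsaddle : IsSaddlePointOn univ univ (fun W (R : S) => gObj W R)
      ((Rs.toBlocks₁₂)ᴴ * (Rs.toBlocks₁₁)⁻¹) ⟨Rs, hRs⟩ :=
    fun W _ R _ => (hleft R R.2).trans (hright W)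
  exact hsaddle.ciInf_ciSup_eq hbdd
    fun R => ⟨f1 R.1, forall_mem_range.2 fun W => f1_le_gObj (hA R R.2) W⟩
end

section
/- Fix W ∈ ℂ^{M×N}, R_xs ∈ ℂ^{N×M}, Hermitian R_s ∈ ℂ^{M×M}, a Hermitian nominal matrix R̂_x ∈ ℂ^{N×N}, a Hermitian positive semidefinite matrix F ∈ ℂ^{N×N}, and ε₀ ≥ 0 with R̂_x − ε₀F positive semidefinite. Then the supremum of g(W; R_x, R_xs, R_s) over all Hermitian R_x satisfying R̂_x − ε₀F ⪯ R_x ⪯ R̂_x + ε₀F equals g(W; R̂_x, R_xs, R_s) + ε₀ Tr(W F Wᴴ), and it is attained at R_x = R̂_x + ε₀F. In particular, with F = I_N the distributionally robust linear estimation problem min_W max_{R_x} g(W; R_x, R_xs, R_s) is exactly the ridge regression problem min_W [g(W; R̂_x, R_xs, R_s) + ε₀ Tr(W Wᴴ)], and for general F ⪰ 0 it is the Tikhonov-regularized problem min_W [g(W; R̂_x, R_xs, R_s) + ε₀ Tr(W F Wᴴ)]. -/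
open Matrix
open scoped ComplexOrder

/-
The objective is affine in `R_x`, with `g(W; R_x + D) = g(W; R_x) + Re Tr(W D Wᴴ)`, and
`D ↦ W D Wᴴ` preserves positive semidefiniteness, so `g(W; ·)` is monotone for the Loewner
order. Hence on the uncertainty set it is maximised at the upper end `R̂_x + ε₀F`, where it
equals `g(W; R̂_x) + ε₀ Re Tr(W F Wᴴ)`.
-/

namespace Matrix

variable {m n 𝕜 : Type*} [Fintype m] [Fintype n] [RCLike 𝕜]

noncomputable def beamformingObjective (W : Matrix m n 𝕜) (Rx : Matrix n n 𝕜)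
    (Rxs : Matrix n m 𝕜) (Rs : Matrix m m 𝕜) : ℝ :=
  RCLike.re (W * Rx * Wᴴ - W * Rxs - Rxsᴴ * Wᴴ + Rs).trace

lemma PosSemidef.re_trace_nonneg_s7 {A : Matrix n n 𝕜} (hA : A.PosSemidef) :
    0 ≤ RCLike.re A.trace :=
  (RCLike.nonneg_iff.mp hA.trace_nonneg).1

variable (W : Matrix m n 𝕜) (Rxs : Matrix n m 𝕜) (Rs : Matrix m m 𝕜)

lemma beamformingObjective_add (Rx D : Matrix n n 𝕜) :
    beamformingObjective W (Rx + D) Rxs Rs =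
      beamformingObjective W Rx Rxs Rs + RCLike.re (W * D * Wᴴ).trace := by
  simp only [beamformingObjective, Matrix.mul_add, Matrix.add_mul, trace_add, trace_sub,
    map_add, map_sub]
  ring

lemma beamformingObjective_mono {A B : Matrix n n 𝕜} (hAB : (B - A).PosSemidef) :
    beamformingObjective W A Rxs Rs ≤ beamformingObjective W B Rxs Rs := by
  have hB : B = A + (B - A) := (add_sub_cancel A B).symm
  rw [hB, beamformingObjective_add]
  exact le_add_of_nonneg_right (hAB.mul_mul_conjTranspose_same W).re_trace_nonneg_s7

lemma beamformingObjective_add_smul (Rx F : Matrix n n 𝕜) (ε : ℝ) :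
    beamformingObjective W (Rx + ε • F) Rxs Rs =
      beamformingObjective W Rx Rxs Rs + ε * RCLike.re (W * F * Wᴴ).trace := by
  rw [beamformingObjective_add, Matrix.mul_smul, Matrix.smul_mul, trace_smul,
    RCLike.smul_re]

end Matrix

theorem ridge_regression_distributionally_robust_general {N M : ℕ}
    (W : Matrix (Fin M) (Fin N) ℂ)
    (Rxs : Matrix (Fin N) (Fin M) ℂ) (Rs : Matrix (Fin M) (Fin M) ℂ)
    (Rhatx F : Matrix (Fin N) (Fin N) ℂ)
    (ε₀ : ℝ) :
    (∀ Rx : Matrix (Fin N) (Fin N) ℂ, Rx.IsHermitian →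
        (Rx - (Rhatx - ε₀ • F)).PosSemidef → ((Rhatx + ε₀ • F) - Rx).PosSemidef →
        ((W * Rx * Wᴴ - W * Rxs - Rxsᴴ * Wᴴ + Rs).trace).re
          ≤ ((W * Rhatx * Wᴴ - W * Rxs - Rxsᴴ * Wᴴ + Rs).trace).re
              + ε₀ * ((W * F * Wᴴ).trace).re)
    ∧ ((W * (Rhatx + ε₀ • F) * Wᴴ - W * Rxs - Rxsᴴ * Wᴴ + Rs).trace).re
        = ((W * Rhatx * Wᴴ - W * Rxs - Rxsᴴ * Wᴴ + Rs).trace).re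
            + ε₀ * ((W * F * Wᴴ).trace).re := by
  have hmax := beamformingObjective_add_smul W Rxs Rs Rhatx F ε₀
  refine ⟨fun Rx _ _ hupper => ?_, hmax⟩
  exact hmax ▸ beamformingObjective_mono W Rxs Rs hupper

/-- Over the (generalized) diagonal-loading uncertainty set
`R̂_x − ε₀F ⪯ R_x ⪯ R̂_x + ε₀F`, the supremum of the beamforming objective
`g(W; R_x, R_xs, R_s) = Re Tr(W R_x Wᴴ − W R_xs − R_xsᴴ Wᴴ + R_s)` equals
`g(W; R̂_x, R_xs, R_s) + ε₀ Tr(W F Wᴴ)` and is attained at `R_x = R̂_x + ε₀F`.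
In particular the distributionally robust problem is a ridge (`F = I`) or
Tikhonov-regularized problem. -/
theorem ridge_regression_distributionally_robust {N M : ℕ}
    (W : Matrix (Fin M) (Fin N) ℂ)
    (Rxs : Matrix (Fin N) (Fin M) ℂ) (Rs : Matrix (Fin M) (Fin M) ℂ)
    (hRs : Rs.IsHermitian)
    (Rhatx F : Matrix (Fin N) (Fin N) ℂ)
    (hRhatx : Rhatx.IsHermitian) (hF : F.PosSemidef)
    (ε₀ : ℝ) (hε : 0 ≤ ε₀)
    (hlow : (Rhatx - ε₀ • F).PosSemidef) :
    (∀ Rx : Matrix (Fin N) (Fin N) ℂ, Rx.IsHermitian →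
        (Rx - (Rhatx - ε₀ • F)).PosSemidef → ((Rhatx + ε₀ • F) - Rx).PosSemidef →
        ((W * Rx * Wᴴ - W * Rxs - Rxsᴴ * Wᴴ + Rs).trace).re
          ≤ ((W * Rhatx * Wᴴ - W * Rxs - Rxsᴴ * Wᴴ + Rs).trace).re
              + ε₀ * ((W * F * Wᴴ).trace).re)
    ∧ ((W * (Rhatx + ε₀ • F) * Wᴴ - W * Rxs - Rxsᴴ * Wᴴ + Rs).trace).re
        = ((W * Rhatx * Wᴴ - W * Rxs - Rxsᴴ * Wᴴ + Rs).trace).re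
            + ε₀ * ((W * F * Wᴴ).trace).re :=
  ridge_regression_distributionally_robust_general W Rxs Rs Rhatx F ε₀
end

section
/- Let H ∈ ℂ^{N×M} and define h(R_s, R_v) := Tr(R_s − R_s Hᴴ (H R_s Hᴴ + R_v)⁻¹ H R_s) for Hermitian positive semidefinite R_s ∈ ℂ^{M×M} and R_v ∈ ℂ^{N×N} with H R_s Hᴴ + R_v positive definite. Then h is monotonically increasing in both arguments: (i) if R_{s,1} ⪰ R_{s,2} ⪰ 0 and both H R_{s,i} Hᴴ + R_v are positive definite, then h(R_{s,1}, R_v) ≥ h(R_{s,2}, R_v); (ii) if R_{v,1} ⪰ R_{v,2} and both H R_s Hᴴ + R_{v,i} are positive definite, then h(R_s, R_{v,1}) ≥ h(R_s, R_{v,2}). -/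
open Matrix
open scoped ComplexOrder

/-- The Wiener MMSE `h(R_s, R_v) := Re Tr(R_s − R_s Hᴴ (H R_s Hᴴ + R_v)⁻¹ H R_s)`. -/
noncomputable def hMMSE {N M : ℕ} (H : Matrix (Fin N) (Fin M) ℂ)
    (Rs : Matrix (Fin M) (Fin M) ℂ) (Rv : Matrix (Fin N) (Fin N) ℂ) : ℝ :=
  ((Rs - Rs * Hᴴ * (H * Rs * Hᴴ + Rv)⁻¹ * H * Rs).trace).re

/-!
For a linear estimator `ŝ = W x` of `s` from `x = H s + v`, the error covariance
`E(W) = (1 - W H) R_s (1 - W H)ᴴ + W R_v Wᴴ` is monotone in `(R_s, R_v)` for fixed `W`.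
Completing the square, `E(W) = (W - K) S (W - K)ᴴ + (R_s - K H R_s)` with `S = H R_s Hᴴ + R_v`
and the Wiener filter `K = R_s Hᴴ S⁻¹`, so `h` is the minimum over `W` of `Re Tr E(W)`.
A minimum of monotone functions is monotone: with `K₁` the Wiener filter of the larger pair,
`h(R_s₂, R_v₂) ≤ Tr E₂(K₁) ≤ Tr E₁(K₁) = h(R_s₁, R_v₁)`.
-/

section ErrorCovariance

variable {𝕜 m n : Type*} [RCLike 𝕜] [Fintype m] [Fintype n] [DecidableEq m]

noncomputable def errorCov (H : Matrix n m 𝕜) (W : Matrix m n 𝕜) (Rs : Matrix m m 𝕜)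
    (Rv : Matrix n n 𝕜) : Matrix m m 𝕜 :=
  (1 - W * H) * Rs * (1 - W * H)ᴴ + W * Rv * Wᴴ

lemma errorCov_sub_errorCov_posSemidef (H : Matrix n m 𝕜) (W : Matrix m n 𝕜)
    {Rs₁ Rs₂ : Matrix m m 𝕜} {Rv₁ Rv₂ : Matrix n n 𝕜} (hRs : (Rs₁ - Rs₂).PosSemidef)
    (hRv : (Rv₁ - Rv₂).PosSemidef) :
    (errorCov H W Rs₁ Rv₁ - errorCov H W Rs₂ Rv₂).PosSemidef := by
  have h : errorCov H W Rs₁ Rv₁ - errorCov H W Rs₂ Rv₂ =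
      (1 - W * H) * (Rs₁ - Rs₂) * (1 - W * H)ᴴ + W * (Rv₁ - Rv₂) * Wᴴ := by
    simp only [errorCov, Matrix.mul_sub, Matrix.sub_mul]
    abel
  rw [h]
  exact (hRs.mul_mul_conjTranspose_same _).add (hRv.mul_mul_conjTranspose_same _)

variable [DecidableEq n]

noncomputable def wienerFilter (H : Matrix n m 𝕜) (Rs : Matrix m m 𝕜) (Rv : Matrix n n 𝕜) :
    Matrix m n 𝕜 :=
  Rs * Hᴴ * (H * Rs * Hᴴ + Rv)⁻¹

lemma errorCov_eq_add_wienerFilter (H : Matrix n m 𝕜) {Rs : Matrix m m 𝕜}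
    {Rv : Matrix n n 𝕜} (hRs : Rs.IsHermitian) (hRv : Rv.IsHermitian)
    (hS : IsUnit (H * Rs * Hᴴ + Rv)) (W : Matrix m n 𝕜) :
    errorCov H W Rs Rv =
      (W - wienerFilter H Rs Rv) * (H * Rs * Hᴴ + Rv) * (W - wienerFilter H Rs Rv)ᴴ +
        (Rs - wienerFilter H Rs Rv * H * Rs) := by
  set S := H * Rs * Hᴴ + Rv with hS_def
  set K := wienerFilter H Rs Rv
  have hS_herm : Sᴴ = S := by
    simp only [hS_def, conjTranspose_add, conjTranspose_mul, conjTranspose_conjTranspose,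
      hRs.eq, hRv.eq, Matrix.mul_assoc]
  have hKS : K * S = Rs * Hᴴ :=
    nonsing_inv_mul_cancel_right _ _ ((isUnit_iff_isUnit_det S).mp hS)
  have hSK : S * Kᴴ = H * Rs := by
    rw [← hS_herm, ← conjTranspose_mul, hKS, conjTranspose_mul, hRs.eq,
      conjTranspose_conjTranspose]
  have hsquare :
      (W - K) * S * (W - K)ᴴ = W * S * Wᴴ - W * (S * Kᴴ) - K * S * Wᴴ + K * (S * Kᴴ) := by
    simp only [conjTranspose_sub, Matrix.sub_mul, Matrix.mul_sub, Matrix.mul_assoc]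
    abel
  rw [hsquare, hSK, hKS, hS_def]
  simp only [errorCov, conjTranspose_sub, conjTranspose_mul, conjTranspose_one, Matrix.sub_mul,
    Matrix.mul_sub, Matrix.add_mul, Matrix.mul_add, Matrix.one_mul, Matrix.mul_one, Matrix.mul_assoc]
  abel

lemma errorCov_sub_wienerFilter_posSemidef (H : Matrix n m 𝕜) {Rs : Matrix m m 𝕜}
    {Rv : Matrix n n 𝕜} (hRs : Rs.IsHermitian) (hRv : Rv.IsHermitian)
    (hS : (H * Rs * Hᴴ + Rv).PosDef) (W : Matrix m n 𝕜) :
    (errorCov H W Rs Rv - (Rs - wienerFilter H Rs Rv * H * Rs)).PosSemidef := by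
  rw [errorCov_eq_add_wienerFilter H hRs hRv hS.isUnit W, add_sub_cancel_right]
  exact hS.posSemidef.mul_mul_conjTranspose_same _

lemma errorCov_wienerFilter (H : Matrix n m 𝕜) {Rs : Matrix m m 𝕜} {Rv : Matrix n n 𝕜}
    (hRs : Rs.IsHermitian) (hRv : Rv.IsHermitian) (hS : IsUnit (H * Rs * Hᴴ + Rv)) :
    errorCov H (wienerFilter H Rs Rv) Rs Rv = Rs - wienerFilter H Rs Rv * H * Rs := by
  rw [errorCov_eq_add_wienerFilter H hRs hRv hS, sub_self, Matrix.zero_mul, Matrix.zero_mul,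
    zero_add]

end ErrorCovariance

lemma Matrix.PosSemidef.re_trace_le_of_sub {n : Type*} [Fintype n] {X Y : Matrix n n ℂ}
    (h : (X - Y).PosSemidef) : Y.trace.re ≤ X.trace.re := by
  have := (Complex.le_def.mp h.trace_nonneg).1
  rw [trace_sub, Complex.sub_re, Complex.zero_re] at this
  linarith

lemma hMMSE_eq_re_trace {N M : ℕ} (H : Matrix (Fin N) (Fin M) ℂ)
    (Rs : Matrix (Fin M) (Fin M) ℂ) (Rv : Matrix (Fin N) (Fin N) ℂ) :
    hMMSE H Rs Rv = (Rs - wienerFilter H Rs Rv * H * Rs).trace.re :=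
  rfl

theorem hMMSE_mono {N M : ℕ} (H : Matrix (Fin N) (Fin M) ℂ)
    {Rs₁ Rs₂ : Matrix (Fin M) (Fin M) ℂ} {Rv₁ Rv₂ : Matrix (Fin N) (Fin N) ℂ}
    (hRs₁ : Rs₁.IsHermitian) (hRs₂ : Rs₂.IsHermitian) (hRv₁ : Rv₁.IsHermitian)
    (hRv₂ : Rv₂.IsHermitian) (hRs : (Rs₁ - Rs₂).PosSemidef) (hRv : (Rv₁ - Rv₂).PosSemidef)
    (hS₁ : (H * Rs₁ * Hᴴ + Rv₁).PosDef) (hS₂ : (H * Rs₂ * Hᴴ + Rv₂).PosDef) :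
    hMMSE H Rs₂ Rv₂ ≤ hMMSE H Rs₁ Rv₁ := by
  set K₁ := wienerFilter H Rs₁ Rv₁
  calc hMMSE H Rs₂ Rv₂
      ≤ (errorCov H K₁ Rs₂ Rv₂).trace.re :=
        (errorCov_sub_wienerFilter_posSemidef H hRs₂ hRv₂ hS₂ K₁).re_trace_le_of_sub
    _ ≤ (errorCov H K₁ Rs₁ Rv₁).trace.re :=
        (errorCov_sub_errorCov_posSemidef H K₁ hRs hRv).re_trace_le_of_sub
    _ = hMMSE H Rs₁ Rv₁ := by
        rw [errorCov_wienerFilter H hRs₁ hRv₁ hS₁.isUnit, hMMSE_eq_re_trace]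

/-- The Wiener MMSE `h(R_s, R_v)` is monotonically increasing in both the transmit
covariance `R_s` and the noise covariance `R_v` (over Hermitian PSD matrices making the
relevant matrix `H R_s Hᴴ + R_v` positive definite). -/
theorem hMMSE_monotone {N M : ℕ} (H : Matrix (Fin N) (Fin M) ℂ) :
    (∀ (Rs₁ Rs₂ : Matrix (Fin M) (Fin M) ℂ) (Rv : Matrix (Fin N) (Fin N) ℂ),
        Rs₁.PosSemidef → Rs₂.PosSemidef → Rv.PosSemidef →
        (Rs₁ - Rs₂).PosSemidef →
        (H * Rs₁ * Hᴴ + Rv).PosDef → (H * Rs₂ * Hᴴ + Rv).PosDef →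
        hMMSE H Rs₂ Rv ≤ hMMSE H Rs₁ Rv)
    ∧ (∀ (Rs : Matrix (Fin M) (Fin M) ℂ) (Rv₁ Rv₂ : Matrix (Fin N) (Fin N) ℂ),
        Rs.PosSemidef → Rv₁.PosSemidef → Rv₂.PosSemidef →
        (Rv₁ - Rv₂).PosSemidef →
        (H * Rs * Hᴴ + Rv₁).PosDef → (H * Rs * Hᴴ + Rv₂).PosDef →
        hMMSE H Rs Rv₂ ≤ hMMSE H Rs Rv₁) := by
  constructor
  · intro Rs₁ Rs₂ Rv hRs₁ hRs₂ hRv hRs hS₁ hS₂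
    exact hMMSE_mono H hRs₁.1 hRs₂.1 hRv.1 hRv.1 hRs (by simpa using PosSemidef.zero) hS₁ hS₂
  · intro Rs Rv₁ Rv₂ hRs hRv₁ hRv₂ hRv hS₁ hS₂
    exact hMMSE_mono H hRs.1 hRs.1 hRv₁.1 hRv₂.1 (by simpa using PosSemidef.zero) hRv hS₁ hS₂
end

section
/- Let R̂, R ∈ ℂ^{n×n} be Hermitian positive semidefinite and ε₀ ≥ 0. Then the Wasserstein-type constraint Tr(R + R̂ − 2 (R̂^{1/2} R R̂^{1/2})^{1/2}) ≤ ε₀² holds if and only if there exists a Hermitian positive semidefinite matrix U ∈ ℂ^{n×n} such that Tr(R + R̂ − 2U) ≤ ε₀² and the block matrix fromBlocks(R̂^{1/2} R R̂^{1/2}, U; U, I_n) is positive semidefinite. Consequently, the nonlinear semidefinite program maximizing Tr(R) subject to the Wasserstein constraint and the linear semidefinite program maximizing Tr(R) over pairs (R, U) subject to the linear constraints have the same optimal value and the same optimal matrices R. -/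
open Matrix
open scoped ComplexOrder

/-- The Hermitian positive semidefinite square root of a matrix
(junk value `0` if the matrix is not PSD). -/
noncomputable def psdSqrt {n : ℕ} (A : Matrix (Fin n) (Fin n) ℂ) :
    Matrix (Fin n) (Fin n) ℂ :=
  open scoped Classical in
  if h : A.PosSemidef then
    (h.1.eigenvectorUnitary : Matrix (Fin n) (Fin n) ℂ) *
      diagonal ((↑) ∘ (√·) ∘ h.1.eigenvalues) *
      (star h.1.eigenvectorUnitary : Matrix (Fin n) (Fin n) ℂ)
  else 0

/-! Write `M = R̂^{1/2} R R̂^{1/2}`. By the Schur complement, `fromBlocks(M, U; U, I) ⪰ 0` says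
`U² ⪯ M`, and since the square root is operator monotone this gives `U ⪯ M^{1/2}` for `U ⪰ 0`.
So `M^{1/2}` is a feasible `U` of largest trace, and the linear constraint on `(R, U)` is
satisfiable exactly when it holds for `U = M^{1/2}`, which is the Wasserstein constraint. -/

open scoped MatrixOrder Matrix.Norms.L2Operator

lemma Matrix.posSemidef_fromBlocks_one_iff {ι : Type*} [Fintype ι] [DecidableEq ι]
    {M U : Matrix ι ι ℂ} (hU : U.IsHermitian) :
    (fromBlocks M U U 1).PosSemidef ↔ (M - U * U).PosSemidef := by
  have : Invertible (1 : Matrix ι ι ℂ) := invertibleOne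
  conv_lhs => rw [← hU.eq]
  simpa [hU.eq] using PosDef.fromBlocks₂₂ M U PosDef.one

lemma Matrix.re_trace_mono {ι : Type*} [Fintype ι] {A B : Matrix ι ι ℂ} (h : A ≤ B) :
    A.trace.re ≤ B.trace.re := by
  have := (Complex.le_def.mp (nonneg_iff_posSemidef.mp (sub_nonneg.mpr h)).trace_nonneg).1
  simpa [trace_sub] using this

section psdSqrt

variable {n : ℕ}

lemma psdSqrt_eq_cfc {A : Matrix (Fin n) (Fin n) ℂ} (hA : A.PosSemidef) :
    psdSqrt A = cfc Real.sqrt A := by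
  rw [psdSqrt, dif_pos hA, hA.1.cfc_eq, IsHermitian.cfc, Unitary.conjStarAlgAut_apply]
  rfl

lemma psdSqrt_eq_sqrt {A : Matrix (Fin n) (Fin n) ℂ} (hA : A.PosSemidef) :
    psdSqrt A = CFC.sqrt A := by
  rw [psdSqrt_eq_cfc hA, CFC.sqrt_eq_real_sqrt A hA.nonneg, cfcₙ_eq_cfc]

lemma posSemidef_psdSqrt (A : Matrix (Fin n) (Fin n) ℂ) : (psdSqrt A).PosSemidef := by
  by_cases hA : A.PosSemidef
  · rw [psdSqrt_eq_sqrt hA, ← nonneg_iff_posSemidef]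
    exact CFC.sqrt_nonneg A
  · rw [psdSqrt, dif_neg hA]
    exact .zero

lemma psdSqrt_mul_self {A : Matrix (Fin n) (Fin n) ℂ} (hA : A.PosSemidef) :
    psdSqrt A * psdSqrt A = A := by
  rw [psdSqrt_eq_sqrt hA]
  exact CFC.sqrt_mul_sqrt_self A hA.nonneg

lemma le_psdSqrt_of_mul_self_le {U M : Matrix (Fin n) (Fin n) ℂ} (hU : U.PosSemidef)
    (h : U * U ≤ M) : U ≤ psdSqrt M := by
  have hUU : 0 ≤ U * U := by
    simpa [hU.1.eq] using (posSemidef_conjTranspose_mul_self U).nonneg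
  rw [psdSqrt_eq_sqrt (nonneg_iff_posSemidef.mp (hUU.trans h)),
    ← CFC.sqrt_mul_self U hU.nonneg]
  exact CFC.sqrt_le_sqrt _ _ h

lemma posSemidef_psdSqrt_mul_mul_psdSqrt (A : Matrix (Fin n) (Fin n) ℂ)
    {R : Matrix (Fin n) (Fin n) ℂ} (hR : R.PosSemidef) :
    (psdSqrt A * R * psdSqrt A).PosSemidef := by
  simpa [(posSemidef_psdSqrt A).1.eq] using hR.conjTranspose_mul_mul_same (psdSqrt A)

lemma posSemidef_fromBlocks_psdSqrt {M : Matrix (Fin n) (Fin n) ℂ} (hM : M.PosSemidef) :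
    (fromBlocks M (psdSqrt M) (psdSqrt M) 1).PosSemidef := by
  rw [posSemidef_fromBlocks_one_iff (posSemidef_psdSqrt M).1, psdSqrt_mul_self hM, sub_self]
  exact .zero

lemma re_trace_le_re_trace_psdSqrt {M U : Matrix (Fin n) (Fin n) ℂ} (hU : U.PosSemidef)
    (hblock : (fromBlocks M U U 1).PosSemidef) : U.trace.re ≤ (psdSqrt M).trace.re := by
  rw [posSemidef_fromBlocks_one_iff hU.1, ← nonneg_iff_posSemidef, sub_nonneg] at hblock
  exact re_trace_mono (le_psdSqrt_of_mul_self_le hU hblock)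

theorem re_trace_sub_smul_psdSqrt_le_iff {M : Matrix (Fin n) (Fin n) ℂ} (hM : M.PosSemidef)
    (A : Matrix (Fin n) (Fin n) ℂ) {t : ℝ} (ht : 0 ≤ t) (c : ℝ) :
    (A - t • psdSqrt M).trace.re ≤ c ↔ ∃ U : Matrix (Fin n) (Fin n) ℂ, U.PosSemidef ∧
      (A - t • U).trace.re ≤ c ∧ (fromBlocks M U U 1).PosSemidef := by
  have re_trace_sub_smul (X : Matrix (Fin n) (Fin n) ℂ) :
      (A - t • X).trace.re = A.trace.re - t * X.trace.re := by
    simp [trace_sub, trace_smul]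
  constructor
  · exact fun h => ⟨psdSqrt M, posSemidef_psdSqrt M, h, posSemidef_fromBlocks_psdSqrt hM⟩
  · rintro ⟨U, hU, hUtrace, hUblock⟩
    have := mul_le_mul_of_nonneg_left (re_trace_le_re_trace_psdSqrt hU hUblock) ht
    rw [re_trace_sub_smul] at hUtrace ⊢
    linarith

end psdSqrt

theorem wasserstein_sdp_reformulation_general (n : ℕ)
    (Rhat : Matrix (Fin n) (Fin n) ℂ)
    (ε₀ : ℝ) :
    (∀ R : Matrix (Fin n) (Fin n) ℂ, R.PosSemidef →
      (((R + Rhat - (2 : ℝ) • psdSqrt (psdSqrt Rhat * R * psdSqrt Rhat)).trace).re ≤ ε₀ ^ 2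
        ↔ ∃ U : Matrix (Fin n) (Fin n) ℂ, U.PosSemidef ∧
            ((R + Rhat - (2 : ℝ) • U).trace).re ≤ ε₀ ^ 2 ∧
            (Matrix.fromBlocks (psdSqrt Rhat * R * psdSqrt Rhat) U U
              (1 : Matrix (Fin n) (Fin n) ℂ)).PosSemidef))
    ∧ { R : Matrix (Fin n) (Fin n) ℂ | R.PosSemidef ∧
          ((R + Rhat - (2 : ℝ) • psdSqrt (psdSqrt Rhat * R * psdSqrt Rhat)).trace).re
            ≤ ε₀ ^ 2 }
        = { R : Matrix (Fin n) (Fin n) ℂ | R.PosSemidef ∧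
            ∃ U : Matrix (Fin n) (Fin n) ℂ, U.PosSemidef ∧
              ((R + Rhat - (2 : ℝ) • U).trace).re ≤ ε₀ ^ 2 ∧
              (Matrix.fromBlocks (psdSqrt Rhat * R * psdSqrt Rhat) U U
                (1 : Matrix (Fin n) (Fin n) ℂ)).PosSemidef } := by
  have reformulation R (hR : R.PosSemidef) :=
    re_trace_sub_smul_psdSqrt_le_iff (posSemidef_psdSqrt_mul_mul_psdSqrt Rhat hR) (R + Rhat)
      zero_le_two (ε₀ ^ 2)
  exact ⟨reformulation, Set.ext fun R => and_congr_right (reformulation R)⟩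

/-- Linear SDP reformulation of the Wasserstein constraint: for Hermitian PSD `R̂` and
`R`, `Tr(R + R̂ − 2(R̂^{1/2} R R̂^{1/2})^{1/2}) ≤ ε₀²` iff there is a Hermitian PSD `U` with
`Tr(R + R̂ − 2U) ≤ ε₀²` and `fromBlocks(R̂^{1/2} R R̂^{1/2}, U; U, I) ⪰ 0`. Consequently the
nonlinear SDP maximizing `Tr R` under the Wasserstein constraint and the linear SDP over
pairs `(R, U)` have the same feasible matrices `R` (hence the same optimal value and the
same optimal matrices). -/
theorem wasserstein_sdp_reformulation (n : ℕ)
    (Rhat : Matrix (Fin n) (Fin n) ℂ) (hRhat : Rhat.PosSemidef)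
    (ε₀ : ℝ) (hε : 0 ≤ ε₀) :
    (∀ R : Matrix (Fin n) (Fin n) ℂ, R.PosSemidef →
      (((R + Rhat - (2 : ℝ) • psdSqrt (psdSqrt Rhat * R * psdSqrt Rhat)).trace).re ≤ ε₀ ^ 2
        ↔ ∃ U : Matrix (Fin n) (Fin n) ℂ, U.PosSemidef ∧
            ((R + Rhat - (2 : ℝ) • U).trace).re ≤ ε₀ ^ 2 ∧
            (Matrix.fromBlocks (psdSqrt Rhat * R * psdSqrt Rhat) U U
              (1 : Matrix (Fin n) (Fin n) ℂ)).PosSemidef))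
    ∧ { R : Matrix (Fin n) (Fin n) ℂ | R.PosSemidef ∧
          ((R + Rhat - (2 : ℝ) • psdSqrt (psdSqrt Rhat * R * psdSqrt Rhat)).trace).re
            ≤ ε₀ ^ 2 }
        = { R : Matrix (Fin n) (Fin n) ℂ | R.PosSemidef ∧
            ∃ U : Matrix (Fin n) (Fin n) ℂ, U.PosSemidef ∧
              ((R + Rhat - (2 : ℝ) • U).trace).re ≤ ε₀ ^ 2 ∧
              (Matrix.fromBlocks (psdSqrt Rhat * R * psdSqrt Rhat) U U
                (1 : Matrix (Fin n) (Fin n) ℂ)).PosSemidef } :=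
  wasserstein_sdp_reformulation_general n Rhat ε₀
end

section
/- Let R_x ∈ ℂ^{N×N} be Hermitian positive semidefinite, R_xs ∈ ℂ^{N×M}, R_s ∈ ℂ^{M×M} Hermitian, W′ ∈ ℂ^{M×N}, and λ > 0 (so that R_x + λI_N is positive definite). Then the unique minimizer over W ∈ ℂ^{M×N} of the multi-frame objective g(W; R_x, R_xs, R_s) + λ Tr((W − W′)(W − W′)ᴴ) is W⋆ = (R_xs + λ W′ᴴ)ᴴ (R_x + λ I_N)⁻¹. -/
open Matrix
open scoped ComplexOrder

/-- The multi-frame beamforming objective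
`g(W; R_x, R_xs, R_s) + λ Tr((W − W′)(W − W′)ᴴ)` (real part). -/
noncomputable def multiFrameObj {N M : ℕ}
    (Rx : Matrix (Fin N) (Fin N) ℂ) (Rxs : Matrix (Fin N) (Fin M) ℂ)
    (Rs : Matrix (Fin M) (Fin M) ℂ) (W' : Matrix (Fin M) (Fin N) ℂ) (lam : ℝ)
    (W : Matrix (Fin M) (Fin N) ℂ) : ℝ :=
  ((W * Rx * Wᴴ - W * Rxs - Rxsᴴ * Wᴴ + Rs).trace).re
    + lam * (((W - W') * (W - W')ᴴ).trace).re

/-!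
The regulariser only shifts the second-order statistics: the multi-frame objective is the
single-frame Wiener objective `g(W; R_x + λI, R_xs + λW′ᴴ, R_s + λW′W′ᴴ)`. For positive definite
`A`, completing the square gives
`g(W; A, B, C) = Re Tr((W − BᴴA⁻¹) A (W − BᴴA⁻¹)ᴴ) + g(BᴴA⁻¹; A, B, C)`, and `Re Tr(X A Xᴴ)` is
nonnegative and vanishes only at `X = 0`, because its `i`-th diagonal term is the `A`-quadratic
form of the conjugate of the `i`-th row of `X`.
-/

namespace Matrix

variable {𝕜 : Type*} [RCLike 𝕜] {m n : Type*} [Fintype n]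

theorem mul_mul_conjTranspose_apply_self (A : Matrix n n 𝕜) (X : Matrix m n 𝕜) (i : m) :
    (X * A * Xᴴ) i i = star (star (X i)) ⬝ᵥ (A *ᵥ star (X i)) := by
  rw [star_star, dotProduct_mulVec, mul_apply']
  rfl

theorem PosDef.mul_mul_conjTranspose_eq_zero_iff {A : Matrix n n 𝕜} (hA : A.PosDef)
    {X : Matrix m n 𝕜} : X * A * Xᴴ = 0 ↔ X = 0 := by
  refine ⟨fun h => ?_, fun h => by simp [h]⟩
  funext i
  by_contra hrow
  have hpos := hA.dotProduct_mulVec_pos (star_ne_zero.mpr hrow)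
  rw [← mul_mul_conjTranspose_apply_self, h] at hpos
  exact lt_irrefl _ hpos

theorem mul_mul_conjTranspose_sub_sub_eq [DecidableEq n] {A : Matrix n n 𝕜}
    (hA : A.IsHermitian) (hdet : IsUnit A.det) (B : Matrix n m 𝕜) (W : Matrix m n 𝕜) :
    W * A * Wᴴ - W * B - Bᴴ * Wᴴ
      = (W - Bᴴ * A⁻¹) * A * (W - Bᴴ * A⁻¹)ᴴ - Bᴴ * A⁻¹ * B := by
  simp only [conjTranspose_sub, conjTranspose_mul, conjTranspose_conjTranspose,
    conjTranspose_nonsing_inv, hA.eq, Matrix.sub_mul, Matrix.mul_sub, Matrix.mul_assoc,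
    mul_nonsing_inv_cancel_left _ _ hdet, nonsing_inv_mul_cancel_left _ _ hdet]
  abel

variable [Fintype m]

theorem PosDef.re_trace_mul_mul_conjTranspose_eq_zero_iff {A : Matrix n n 𝕜} (hA : A.PosDef)
    {X : Matrix m n 𝕜} : RCLike.re (X * A * Xᴴ).trace = 0 ↔ X = 0 := by
  have hpsd := hA.posSemidef.mul_mul_conjTranspose_same X
  obtain ⟨-, him⟩ := RCLike.nonneg_iff.mp hpsd.trace_nonneg
  rw [← hA.mul_mul_conjTranspose_eq_zero_iff, ← hpsd.trace_eq_zero_iff]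
  exact ⟨fun hre => RCLike.ext (by simpa using hre) (by simpa using him), fun h => by simp [h]⟩

end Matrix

section Wiener

variable {𝕜 : Type*} [RCLike 𝕜] {m n : Type*} [Fintype m] [Fintype n]

noncomputable def wienerObj (Rx : Matrix n n 𝕜) (Rxs : Matrix n m 𝕜) (Rs : Matrix m m 𝕜)
    (W : Matrix m n 𝕜) : ℝ :=
  RCLike.re (W * Rx * Wᴴ - W * Rxs - Rxsᴴ * Wᴴ + Rs).trace

variable [DecidableEq n] {Rx : Matrix n n 𝕜} (Rxs : Matrix n m 𝕜) (Rs : Matrix m m 𝕜)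

theorem wienerObj_eq_re_trace_add (hRx : Rx.IsHermitian) (hunit : IsUnit Rx)
    (W : Matrix m n 𝕜) :
    wienerObj Rx Rxs Rs W
      = RCLike.re ((W - Rxsᴴ * Rx⁻¹) * Rx * (W - Rxsᴴ * Rx⁻¹)ᴴ).trace
        + wienerObj Rx Rxs Rs (Rxsᴴ * Rx⁻¹) := by
  have hdet : IsUnit Rx.det := (isUnit_iff_isUnit_det Rx).mp hunit
  simp only [wienerObj, mul_mul_conjTranspose_sub_sub_eq hRx hdet, sub_self, Matrix.zero_mul,
    trace_add, trace_sub, trace_zero, map_add, map_sub, map_zero]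
  ring

theorem wienerObj_conjTranspose_mul_inv_le (hRx : Rx.PosDef) (W : Matrix m n 𝕜) :
    wienerObj Rx Rxs Rs (Rxsᴴ * Rx⁻¹) ≤ wienerObj Rx Rxs Rs W := by
  rw [wienerObj_eq_re_trace_add Rxs Rs hRx.isHermitian hRx.isUnit W, le_add_iff_nonneg_left]
  exact (RCLike.nonneg_iff.mp (hRx.posSemidef.mul_mul_conjTranspose_same _).trace_nonneg).1

theorem eq_conjTranspose_mul_inv_of_wienerObj_eq (hRx : Rx.PosDef) {W : Matrix m n 𝕜}
    (h : wienerObj Rx Rxs Rs W = wienerObj Rx Rxs Rs (Rxsᴴ * Rx⁻¹)) : W = Rxsᴴ * Rx⁻¹ := by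
  rw [wienerObj_eq_re_trace_add Rxs Rs hRx.isHermitian hRx.isUnit W,
    add_eq_right, hRx.re_trace_mul_mul_conjTranspose_eq_zero_iff] at h
  exact sub_eq_zero.mp h

end Wiener

theorem multiFrameObj_eq_wienerObj {N M : ℕ}
    (Rx : Matrix (Fin N) (Fin N) ℂ) (Rxs : Matrix (Fin N) (Fin M) ℂ)
    (Rs : Matrix (Fin M) (Fin M) ℂ) (W' : Matrix (Fin M) (Fin N) ℂ) (lam : ℝ)
    (W : Matrix (Fin M) (Fin N) ℂ) :
    multiFrameObj Rx Rxs Rs W' lam W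
      = wienerObj (Rx + lam • 1) (Rxs + lam • W'ᴴ) (Rs + lam • (W' * W'ᴴ)) W := by
  have hexpand : W * (Rx + lam • 1) * Wᴴ - W * (Rxs + lam • W'ᴴ) - (Rxs + lam • W'ᴴ)ᴴ * Wᴴ
        + (Rs + lam • (W' * W'ᴴ))
      = (W * Rx * Wᴴ - W * Rxs - Rxsᴴ * Wᴴ + Rs) + lam • ((W - W') * (W - W')ᴴ) := by
    simp only [conjTranspose_add, conjTranspose_smul, star_trivial, conjTranspose_conjTranspose,
      conjTranspose_sub, Matrix.mul_add, Matrix.add_mul, Matrix.mul_sub, Matrix.sub_mul,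
      Matrix.mul_smul, Matrix.smul_mul, Matrix.mul_one, smul_sub]
    abel
  rw [wienerObj, hexpand, trace_add, trace_smul, map_add, RCLike.smul_re]
  rfl

theorem multi_frame_wiener_unique_minimizer_general {N M : ℕ}
    (Rx : Matrix (Fin N) (Fin N) ℂ) (hRx : Rx.PosSemidef)
    (Rxs : Matrix (Fin N) (Fin M) ℂ)
    (Rs : Matrix (Fin M) (Fin M) ℂ)
    (W' : Matrix (Fin M) (Fin N) ℂ) (lam : ℝ) (hlam : 0 < lam) :
    ∀ W : Matrix (Fin M) (Fin N) ℂ,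
      multiFrameObj Rx Rxs Rs W' lam
          ((Rxs + lam • W'ᴴ)ᴴ * (Rx + lam • (1 : Matrix (Fin N) (Fin N) ℂ))⁻¹)
        ≤ multiFrameObj Rx Rxs Rs W' lam W
      ∧ (multiFrameObj Rx Rxs Rs W' lam W
            = multiFrameObj Rx Rxs Rs W' lam
                ((Rxs + lam • W'ᴴ)ᴴ * (Rx + lam • (1 : Matrix (Fin N) (Fin N) ℂ))⁻¹)
          → W = (Rxs + lam • W'ᴴ)ᴴ * (Rx + lam • (1 : Matrix (Fin N) (Fin N) ℂ))⁻¹) := by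
  intro W
  have hA : (Rx + lam • (1 : Matrix (Fin N) (Fin N) ℂ)).PosDef :=
    PosDef.posSemidef_add hRx (.smul .one hlam)
  simp only [multiFrameObj_eq_wienerObj]
  exact ⟨wienerObj_conjTranspose_mul_inv_le _ _ hA W,
    eq_conjTranspose_mul_inv_of_wienerObj_eq _ _ hA⟩

/-- Multi-frame Wiener beamforming: with `R_x ⪰ 0` Hermitian PSD, `R_s` Hermitian and
`λ > 0`, the unique minimizer of `g(W; R_x, R_xs, R_s) + λ Tr((W − W′)(W − W′)ᴴ)` is
`W⋆ = (R_xs + λW′ᴴ)ᴴ (R_x + λI)⁻¹`. -/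
theorem multi_frame_wiener_unique_minimizer {N M : ℕ}
    (Rx : Matrix (Fin N) (Fin N) ℂ) (hRx : Rx.PosSemidef)
    (Rxs : Matrix (Fin N) (Fin M) ℂ)
    (Rs : Matrix (Fin M) (Fin M) ℂ) (hRs : Rs.IsHermitian)
    (W' : Matrix (Fin M) (Fin N) ℂ) (lam : ℝ) (hlam : 0 < lam) :
    ∀ W : Matrix (Fin M) (Fin N) ℂ,
      multiFrameObj Rx Rxs Rs W' lam
          ((Rxs + lam • W'ᴴ)ᴴ * (Rx + lam • (1 : Matrix (Fin N) (Fin N) ℂ))⁻¹)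
        ≤ multiFrameObj Rx Rxs Rs W' lam W
      ∧ (multiFrameObj Rx Rxs Rs W' lam W
            = multiFrameObj Rx Rxs Rs W' lam
                ((Rxs + lam • W'ᴴ)ᴴ * (Rx + lam • (1 : Matrix (Fin N) (Fin N) ℂ))⁻¹)
          → W = (Rxs + lam • W'ᴴ)ᴴ * (Rx + lam • (1 : Matrix (Fin N) (Fin N) ℂ))⁻¹) :=
  multi_frame_wiener_unique_minimizer_general Rx hRx Rxs Rs W' lam hlam
end

section
/- Fix W ∈ ℝ^{m×L}, a symmetric nominal matrix R̂_z ∈ ℝ^{L×L}, a symmetric positive semidefinite matrix F ∈ ℝ^{L×L}, matrices R̂_zs ∈ ℝ^{L×m} and symmetric R̂_s ∈ ℝ^{m×m}, and ε₀ ≥ 0 with R̂_z − ε₀F positive semidefinite. Then the supremum over all symmetric R_z with R̂_z − ε₀F ⪯ R_z ⪯ R̂_z + ε₀F of Tr(W R_z Wᵀ − W R̂_zs − R̂_zsᵀ Wᵀ + R̂_s) equals Tr(W R̂_z Wᵀ − W R̂_zs − R̂_zsᵀ Wᵀ + R̂_s) + ε₀ Tr(W F Wᵀ), attained at R_z = R̂_z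 + ε₀F. In particular, with F = I_L the distributionally robust RKHS estimation problem is exactly kernel ridge regression (squared-Frobenius-norm regularization), and for general F ⪰ 0 it is kernel Tikhonov regularization. -/
open Matrix

/-! The objective is affine in `R_z` through `Tr(W R_z Wᵀ)`, and `R ↦ Tr(W R Wᵀ)` is monotone for
the Loewner order because congruence by `W` preserves positive semidefiniteness and PSD matrices
have nonnegative trace. Hence the objective is maximised at the top of the order interval,
`R̂_z + ε₀F`, where linearity gives the value `Tr(W R̂_z Wᵀ) + ε₀ Tr(W F Wᵀ)` plus the constant part. -/

namespace Matrix

variable {m n : Type*} [Fintype m] [Fintype n]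

theorem trace_mul_mul_transpose_le_of_posSemidef_sub (W : Matrix m n ℝ) {A B : Matrix n n ℝ}
    (hAB : (B - A).PosSemidef) : (W * A * Wᵀ).trace ≤ (W * B * Wᵀ).trace := by
  have hcongr : 0 ≤ (W * (B - A) * Wᵀ).trace := by
    simpa only [conjTranspose_eq_transpose_of_trivial] using
      (hAB.mul_mul_conjTranspose_same W).trace_nonneg
  rw [Matrix.mul_sub, Matrix.sub_mul, trace_sub] at hcongr
  linarith

theorem trace_mul_add_smul_mul_transpose (W : Matrix m n ℝ) (A F : Matrix n n ℝ) (c : ℝ) :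
    (W * (A + c • F) * Wᵀ).trace = (W * A * Wᵀ).trace + c * (W * F * Wᵀ).trace := by
  rw [Matrix.mul_add, Matrix.add_mul, Matrix.mul_smul, Matrix.smul_mul, trace_add, trace_smul,
    smul_eq_mul]

end Matrix

theorem kernel_ridge_distributionally_robust_general {m L : ℕ}
    (W : Matrix (Fin m) (Fin L) ℝ)
    (Rhatz : Matrix (Fin L) (Fin L) ℝ)
    (F : Matrix (Fin L) (Fin L) ℝ)
    (Rhatzs : Matrix (Fin L) (Fin m) ℝ)
    (Rhats : Matrix (Fin m) (Fin m) ℝ)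
    (ε₀ : ℝ) :
    (∀ Rz : Matrix (Fin L) (Fin L) ℝ, Rz.IsSymm →
        (Rz - (Rhatz - ε₀ • F)).PosSemidef → ((Rhatz + ε₀ • F) - Rz).PosSemidef →
        (W * Rz * Wᵀ - W * Rhatzs - Rhatzsᵀ * Wᵀ + Rhats).trace
          ≤ (W * Rhatz * Wᵀ - W * Rhatzs - Rhatzsᵀ * Wᵀ + Rhats).trace
              + ε₀ * (W * F * Wᵀ).trace)
    ∧ (W * (Rhatz + ε₀ • F) * Wᵀ - W * Rhatzs - Rhatzsᵀ * Wᵀ + Rhats).trace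
        = (W * Rhatz * Wᵀ - W * Rhatzs - Rhatzsᵀ * Wᵀ + Rhats).trace
            + ε₀ * (W * F * Wᵀ).trace := by
  have hvalue := trace_mul_add_smul_mul_transpose W Rhatz F ε₀
  simp only [trace_add, trace_sub]
  refine ⟨fun Rz _ _ hupper => ?_, by linarith⟩
  have hmono := trace_mul_mul_transpose_le_of_posSemidef_sub W hupper
  linarith

/-- Kernel ridge regression / kernel Tikhonov regularization as distributional
robustness: over the uncertainty set `R̂_z − ε₀F ⪯ R_z ⪯ R̂_z + ε₀F` (symmetric `R_z`),
the supremum of `Tr(W R_z Wᵀ − W R̂_zs − R̂_zsᵀ Wᵀ + R̂_s)` equals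
`Tr(W R̂_z Wᵀ − W R̂_zs − R̂_zsᵀ Wᵀ + R̂_s) + ε₀ Tr(W F Wᵀ)`, attained at
`R_z = R̂_z + ε₀F`. -/
theorem kernel_ridge_distributionally_robust {m L : ℕ}
    (W : Matrix (Fin m) (Fin L) ℝ)
    (Rhatz : Matrix (Fin L) (Fin L) ℝ) (hRhatz : Rhatz.IsSymm)
    (F : Matrix (Fin L) (Fin L) ℝ) (hF : F.PosSemidef)
    (Rhatzs : Matrix (Fin L) (Fin m) ℝ)
    (Rhats : Matrix (Fin m) (Fin m) ℝ) (hRhats : Rhats.IsSymm)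
    (ε₀ : ℝ) (hε : 0 ≤ ε₀)
    (hlow : (Rhatz - ε₀ • F).PosSemidef) :
    (∀ Rz : Matrix (Fin L) (Fin L) ℝ, Rz.IsSymm →
        (Rz - (Rhatz - ε₀ • F)).PosSemidef → ((Rhatz + ε₀ • F) - Rz).PosSemidef →
        (W * Rz * Wᵀ - W * Rhatzs - Rhatzsᵀ * Wᵀ + Rhats).trace
          ≤ (W * Rhatz * Wᵀ - W * Rhatzs - Rhatzsᵀ * Wᵀ + Rhats).trace
              + ε₀ * (W * F * Wᵀ).trace)
    ∧ (W * (Rhatz + ε₀ • F) * Wᵀ - W * Rhatzs - Rhatzsᵀ * Wᵀ + Rhats).trace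
        = (W * Rhatz * Wᵀ - W * Rhatzs - Rhatzsᵀ * Wᵀ + Rhats).trace
            + ε₀ * (W * F * Wᵀ).trace :=
  kernel_ridge_distributionally_robust_general W Rhatz F Rhatzs Rhats ε₀
end
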